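/- Let n : ℕ with n ≥ 4, and let v, v' : Fin (n+1) → ℍ satisfy ∑ a, normSq (v a) = 1, ∑ a, normSq (v' a) = 1, ν(v) = 0 and ν(v') = 0. Then there exists a real special orthogonal matrix A ∈ SO(n+1) (an orthogonal (n+1)×(n+1) real matrix of determinant 1) such that v' a = ∑ b, (A a b) • (v b) for all a, where real matrix entries act on quaternions by real scalar multiplication. (This is the transitivity of the natural SO(n+1)-action on the sphere-level zero set of the Sp(1)-moment map, used in the identification of ν⁻¹(0) with the homogeneous space SO(n+1)/(SO(n−3)×Sp(1)) in Theorem 3.2 (i).) -/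

import Mathlib

open Quaternion Finset

/-- The imaginary units `i`, `j`, `k` of the quaternions. -/
noncomputable def qi : Quaternion ℝ := ⟨0, 1, 0, 0⟩
noncomputable def qj : Quaternion ℝ := ⟨0, 0, 1, 0⟩
noncomputable def qk : Quaternion ℝ := ⟨0, 0, 0, 1⟩

/-!
Write `v a = x₀ a + x₁ a i + x₂ a j + x₃ a k` with real coordinate vectors `x₀, …, x₃ ∈ ℝⁿ⁺¹`.
The three components of `ν(v)` and `∑ ‖v a‖²` are linear in the Gram matrix `G` of
`x₀, …, x₃`, and the ten resulting equations say exactly that `G = ¼ · 1`, i.e. that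
`2x₀, …, 2x₃` is an orthonormal 4-frame. Since `4 < n + 1`, `SO(n + 1)` acts transitively on
orthonormal 4-frames: extend both frames to orthonormal bases, map one basis to the other, and fix
the sign of the determinant by a reflection in a basis vector outside the frame. A real matrix acts
on each coordinate vector separately, so the matrix moving the frame of `v` to that of `v'`
moves `v` to `v'`.
-/

open Module

section OrthonormalFrame

variable {𝕜 E : Type*} [RCLike 𝕜] [NormedAddCommGroup E] [InnerProductSpace 𝕜 E]
  [FiniteDimensional 𝕜 E] {ι κ : Type*} [Fintype κ]

theorem Orthonormal.exists_orthonormalBasis_extension_of_injective {x : ι → E}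
    (hx : Orthonormal 𝕜 x) (hκ : finrank 𝕜 E = Fintype.card κ) {j : ι → κ}
    (hj : Function.Injective j) :
    ∃ b : OrthonormalBasis κ 𝕜 E, ∀ i, b (j i) = x i := by
  classical
  let e := Equiv.ofInjective j hj
  let v : κ → E := Function.extend j x 0
  have hv : (Set.range j).domRestrict v = x ∘ e.symm := by
    funext k
    conv_lhs => rw [← e.apply_symm_apply k]
    exact hj.extend_apply x 0 _
  obtain ⟨b, hb⟩ := Orthonormal.exists_orthonormalBasis_extension_of_card_eq hκ (v := v)
    (s := Set.range j) (by rw [hv]; exact hx.comp _ e.symm.injective)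
  exact ⟨b, fun i => (hb _ ⟨i, rfl⟩).trans (hj.extend_apply x 0 i)⟩

end OrthonormalFrame

section SpecialOrthogonal

variable {E : Type*} [NormedAddCommGroup E] [InnerProductSpace ℝ E] [FiniteDimensional ℝ E]
  {ι : Type*} [Fintype ι]

theorem LinearIsometryEquiv.det_eq_one_or_eq_neg_one (f : E ≃ₗᵢ[ℝ] E) :
    LinearMap.det f.toLinearMap = 1 ∨ LinearMap.det f.toLinearMap = -1 := by
  let b := stdOrthonormalBasis ℝ E
  have h := b.toBasis.det_comp f.toLinearMap b
  have hself := b.toBasis.det_self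
  simp only [OrthonormalBasis.coe_toBasis] at h hself
  rw [hself, mul_one] at h
  exact h ▸ b.det_to_matrix_orthonormalBasis_real (b.map f)

theorem Orthonormal.exists_linearIsometryEquiv_det_eq_one {x x' : ι → E} (hx : Orthonormal ℝ x)
    (hx' : Orthonormal ℝ x') (hcard : Fintype.card ι < finrank ℝ E) :
    ∃ f : E ≃ₗᵢ[ℝ] E, LinearMap.det f.toLinearMap = 1 ∧ ∀ i, f (x i) = x' i := by
  classical
  let κ := ι ⊕ Fin (finrank ℝ E - Fintype.card ι)
  have hκ : finrank ℝ E = Fintype.card κ := by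
    simp only [κ, Fintype.card_sum, Fintype.card_fin]; omega
  obtain ⟨b, hb⟩ := hx.exists_orthonormalBasis_extension_of_injective hκ Sum.inl_injective
  obtain ⟨b', hb'⟩ := hx'.exists_orthonormalBasis_extension_of_injective hκ Sum.inl_injective
  let f := b.equiv b' (Equiv.refl κ)
  have hf i : f (x i) = x' i := by rw [← hb, ← hb', b.equiv_apply_basis]; rfl
  rcases f.det_eq_one_or_eq_neg_one with hdet | hdet
  · exact ⟨f, hdet, hf⟩
  let k₀ : κ := Sum.inr ⟨0, by omega⟩
  let K := (ℝ ∙ b' k₀)ᗮ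
  refine ⟨f.trans K.reflection, ?_, fun i => ?_⟩
  · have hK : finrank ℝ Kᗮ = 1 := by
      rw [Submodule.orthogonal_orthogonal, finrank_span_singleton (b'.orthonormal.ne_zero k₀)]
    rw [LinearIsometryEquiv.toLinearEquiv_trans, LinearEquiv.coe_trans, LinearMap.det_comp,
      K.det_reflection, hK, hdet]
    norm_num
  · rw [LinearIsometryEquiv.trans_apply, hf, K.reflection_mem_subspace_eq_self]
    rw [Submodule.mem_orthogonal_singleton_iff_inner_right, ← hb']
    exact b'.orthonormal.2 Sum.inr_ne_inl

theorem Orthonormal.exists_mem_specialOrthogonalGroup {n : Type*} [Fintype n] [DecidableEq n]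
    {x x' : ι → EuclideanSpace ℝ n} (hx : Orthonormal ℝ x) (hx' : Orthonormal ℝ x')
    (hcard : Fintype.card ι < Fintype.card n) :
    ∃ A ∈ Matrix.specialOrthogonalGroup n ℝ, ∀ i, Matrix.toEuclideanLin A (x i) = x' i := by
  obtain ⟨f, hdet, hf⟩ := hx.exists_linearIsometryEquiv_det_eq_one hx' (by simpa using hcard)
  let B := (EuclideanSpace.basisFun n ℝ).toBasis
  refine ⟨LinearMap.toMatrix B B f.toLinearMap, ?_, fun i => ?_⟩
  · rw [Matrix.mem_specialOrthogonalGroup_iff, LinearMap.det_toMatrix, hdet]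
    exact ⟨f.toMatrix_mem_unitaryGroup _ _, rfl⟩
  · rw [Matrix.toEuclideanLin_eq_toLin_orthonormal, Matrix.toLin_toMatrix]
    exact hf i

end SpecialOrthogonal

-- `ℍ` is a `def` over `ℍ[ℝ,-1,0,-1]`, so `simp` does not see through it to the
-- `QuaternionAlgebra` API.
namespace Quaternion

variable {ι : Type*}

lemma re_sum (s : Finset ι) (f : ι → ℍ) : (∑ a ∈ s, f a).re = ∑ a ∈ s, (f a).re :=
  map_sum (QuaternionAlgebra.reₗ (-1 : ℝ) 0 (-1)) f s

lemma imI_sum (s : Finset ι) (f : ι → ℍ) : (∑ a ∈ s, f a).imI = ∑ a ∈ s, (f a).imI :=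
  map_sum (QuaternionAlgebra.imIₗ (-1 : ℝ) 0 (-1)) f s

lemma imJ_sum (s : Finset ι) (f : ι → ℍ) : (∑ a ∈ s, f a).imJ = ∑ a ∈ s, (f a).imJ :=
  map_sum (QuaternionAlgebra.imJₗ (-1 : ℝ) 0 (-1)) f s

lemma imK_sum (s : Finset ι) (f : ι → ℍ) : (∑ a ∈ s, f a).imK = ∑ a ∈ s, (f a).imK :=
  map_sum (QuaternionAlgebra.imKₗ (-1 : ℝ) 0 (-1)) f s

end Quaternion

@[simp] lemma qi_re : qi.re = 0 := rfl
@[simp] lemma qi_imI : qi.imI = 1 := rfl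
@[simp] lemma qi_imJ : qi.imJ = 0 := rfl
@[simp] lemma qi_imK : qi.imK = 0 := rfl
@[simp] lemma qj_re : qj.re = 0 := rfl
@[simp] lemma qj_imI : qj.imI = 0 := rfl
@[simp] lemma qj_imJ : qj.imJ = 1 := rfl
@[simp] lemma qj_imK : qj.imK = 0 := rfl
@[simp] lemma qk_re : qk.re = 0 := rfl
@[simp] lemma qk_imI : qk.imI = 0 := rfl
@[simp] lemma qk_imJ : qk.imJ = 0 := rfl
@[simp] lemma qk_imK : qk.imK = 1 := rfl

lemma smul_qi_add_smul_qj_add_smul_qk_eq_zero {x y z : ℝ} :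
    x • qi + y • qj + z • qk = 0 ↔ x = 0 ∧ y = 0 ∧ z = 0 := by
  constructor
  · intro h
    refine ⟨?_, ?_, ?_⟩
    · simpa using congrArg (fun q : ℍ => q.imI) h
    · simpa using congrArg (fun q : ℍ => q.imJ) h
    · simpa using congrArg (fun q : ℍ => q.imK) h
  · rintro ⟨rfl, rfl, rfl⟩
    simp

lemma star_mul_qi_mul (q : ℍ) : star q * qi * q =
    (q.re * q.re + q.imI * q.imI - q.imJ * q.imJ - q.imK * q.imK) • qi +
      (2 * (q.imI * q.imJ) - 2 * (q.re * q.imK)) • qj +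
      (2 * (q.re * q.imJ) + 2 * (q.imI * q.imK)) • qk := by
  apply Quaternion.ext <;> simp [Quaternion.re_mul, Quaternion.imI_mul, Quaternion.imJ_mul,
    Quaternion.imK_mul] <;> ring

lemma star_mul_qj_mul (q : ℍ) : star q * qj * q =
    (2 * (q.re * q.imK) + 2 * (q.imI * q.imJ)) • qi +
      (q.re * q.re + q.imJ * q.imJ - q.imI * q.imI - q.imK * q.imK) • qj +
      (2 * (q.imJ * q.imK) - 2 * (q.re * q.imI)) • qk := by
  apply Quaternion.ext <;> simp [Quaternion.re_mul, Quaternion.imI_mul, Quaternion.imJ_mul,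
    Quaternion.imK_mul] <;> ring

lemma star_mul_qk_mul (q : ℍ) : star q * qk * q =
    (2 * (q.imI * q.imK) - 2 * (q.re * q.imJ)) • qi +
      (2 * (q.re * q.imI) + 2 * (q.imJ * q.imK)) • qj +
      (q.re * q.re + q.imK * q.imK - q.imI * q.imI - q.imJ * q.imJ) • qk := by
  apply Quaternion.ext <;> simp [Quaternion.re_mul, Quaternion.imI_mul, Quaternion.imJ_mul,
    Quaternion.imK_mul] <;> ring

section CoordFrame

variable {ι : Type*}

noncomputable def quaternionCoordFrame (u : ι → ℍ) (μ : Fin 4) : EuclideanSpace ℝ ι :=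
  WithLp.toLp 2 fun a => ![(u a).re, (u a).imI, (u a).imJ, (u a).imK] μ

lemma eq_sum_smul_of_toEuclideanLin_quaternionCoordFrame [Fintype ι] [DecidableEq ι]
    {A : Matrix ι ι ℝ} {u u' : ι → ℍ}
    (h : ∀ μ, Matrix.toEuclideanLin A (quaternionCoordFrame u μ) = quaternionCoordFrame u' μ)
    (a : ι) : u' a = ∑ b, A a b • u b := by
  have hμ μ : (quaternionCoordFrame u' μ).ofLp a =
      ∑ b, A a b * (quaternionCoordFrame u μ).ofLp b := by
    rw [← h μ]; rfl
  apply Quaternion.ext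
  · simpa [Quaternion.re_sum, quaternionCoordFrame] using hμ 0
  · simpa [Quaternion.imI_sum, quaternionCoordFrame] using hμ 1
  · simpa [Quaternion.imJ_sum, quaternionCoordFrame] using hμ 2
  · simpa [Quaternion.imK_sum, quaternionCoordFrame] using hμ 3

variable [Fintype ι]

lemma gram_quaternionCoordFrame_apply (u : ι → ℍ) (μ ν : Fin 4) :
    Matrix.gram ℝ (quaternionCoordFrame u) μ ν =
      ∑ a, ![(u a).re, (u a).imI, (u a).imJ, (u a).imK] μ *
        ![(u a).re, (u a).imI, (u a).imJ, (u a).imK] ν := by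
  simp only [Matrix.gram_apply, quaternionCoordFrame, PiLp.inner_apply, RCLike.inner_apply,
    conj_trivial, mul_comm]

lemma sum_normSq_eq_trace_gram (u : ι → ℍ) :
    ∑ a, normSq (u a) = (Matrix.gram ℝ (quaternionCoordFrame u)).trace := by
  simp only [Matrix.trace, Matrix.diag, Fin.sum_univ_four, gram_quaternionCoordFrame_apply,
    normSq_def', Matrix.cons_val, ← Finset.sum_add_distrib, sq]

lemma sum_star_mul_qi_mul (u : ι → ℍ) : ∑ a, star (u a) * qi * u a =
    let g := Matrix.gram ℝ (quaternionCoordFrame u)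
    (g 0 0 + g 1 1 - g 2 2 - g 3 3) • qi + (2 * g 1 2 - 2 * g 0 3) • qj +
      (2 * g 0 2 + 2 * g 1 3) • qk := by
  simp only [star_mul_qi_mul, Finset.sum_add_distrib, ← Finset.sum_smul,
    gram_quaternionCoordFrame_apply, Matrix.cons_val, Finset.mul_sum, Finset.sum_sub_distrib]

lemma sum_star_mul_qj_mul (u : ι → ℍ) : ∑ a, star (u a) * qj * u a =
    let g := Matrix.gram ℝ (quaternionCoordFrame u)
    (2 * g 0 3 + 2 * g 1 2) • qi + (g 0 0 + g 2 2 - g 1 1 - g 3 3) • qj +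
      (2 * g 2 3 - 2 * g 0 1) • qk := by
  simp only [star_mul_qj_mul, Finset.sum_add_distrib, ← Finset.sum_smul,
    gram_quaternionCoordFrame_apply, Matrix.cons_val, Finset.mul_sum, Finset.sum_sub_distrib]

lemma sum_star_mul_qk_mul (u : ι → ℍ) : ∑ a, star (u a) * qk * u a =
    let g := Matrix.gram ℝ (quaternionCoordFrame u)
    (2 * g 1 3 - 2 * g 0 2) • qi + (2 * g 0 1 + 2 * g 2 3) • qj +
      (g 0 0 + g 3 3 - g 1 1 - g 2 2) • qk := by
  simp only [star_mul_qk_mul, Finset.sum_add_distrib, ← Finset.sum_smul,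
    gram_quaternionCoordFrame_apply, Matrix.cons_val, Finset.mul_sum, Finset.sum_sub_distrib]

lemma gram_quaternionCoordFrame_eq_inv_four_smul_one {u : ι → ℍ}
    (hu : ∑ a, normSq (u a) = 1) (hi : ∑ a, star (u a) * qi * u a = 0)
    (hj : ∑ a, star (u a) * qj * u a = 0) (hk : ∑ a, star (u a) * qk * u a = 0) :
    Matrix.gram ℝ (quaternionCoordFrame u) = (4 : ℝ)⁻¹ • 1 := by
  rw [sum_normSq_eq_trace_gram, Matrix.trace, Fin.sum_univ_four] at hu
  simp only [Matrix.diag_apply] at hu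
  rw [sum_star_mul_qi_mul, smul_qi_add_smul_qj_add_smul_qk_eq_zero] at hi
  rw [sum_star_mul_qj_mul, smul_qi_add_smul_qj_add_smul_qk_eq_zero] at hj
  rw [sum_star_mul_qk_mul, smul_qi_add_smul_qj_add_smul_qk_eq_zero] at hk
  have hsymm μ ν : Matrix.gram ℝ (quaternionCoordFrame u) ν μ =
      Matrix.gram ℝ (quaternionCoordFrame u) μ ν := by
    simp only [Matrix.gram_apply, real_inner_comm]
  generalize Matrix.gram ℝ (quaternionCoordFrame u) = g at hu hi hj hk hsymm ⊢
  obtain ⟨hi₁, hi₂, hi₃⟩ := hi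
  obtain ⟨hj₁, hj₂, hj₃⟩ := hj
  obtain ⟨hk₁, hk₂, hk₃⟩ := hk
  ext μ ν
  fin_cases μ <;> fin_cases ν <;> simp <;>
    linarith [hsymm 0 1, hsymm 0 2, hsymm 0 3, hsymm 1 2, hsymm 1 3, hsymm 2 3]

lemma orthonormal_two_smul_quaternionCoordFrame {u : ι → ℍ}
    (hu : ∑ a, normSq (u a) = 1) (hi : ∑ a, star (u a) * qi * u a = 0)
    (hj : ∑ a, star (u a) * qj * u a = 0) (hk : ∑ a, star (u a) * qk * u a = 0) :
    Orthonormal ℝ fun μ => (2 : ℝ) • quaternionCoordFrame u μ := by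
  rw [orthonormal_iff_ite]
  intro μ ν
  have h := congrFun₂ (gram_quaternionCoordFrame_eq_inv_four_smul_one hu hi hj hk) μ ν
  rw [Matrix.gram_apply] at h
  rw [real_inner_smul_left, real_inner_smul_right, h]
  split_ifs with hμν <;> norm_num [hμν]

end CoordFrame

/-- Transitivity of the natural `SO(n+1)`-action on the sphere-level zero set of the
`Sp(1)`-moment map. -/
theorem stmt_12 (n : ℕ) (hn : 4 ≤ n) (v v' : Fin (n + 1) → Quaternion ℝ)
    (hv : (∑ a, Quaternion.normSq (v a)) = 1) (hv' : (∑ a, Quaternion.normSq (v' a)) = 1)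
    (hνv : (∑ a, star (v a) * qi * v a) = 0 ∧ (∑ a, star (v a) * qj * v a) = 0 ∧
      (∑ a, star (v a) * qk * v a) = 0)
    (hνv' : (∑ a, star (v' a) * qi * v' a) = 0 ∧ (∑ a, star (v' a) * qj * v' a) = 0 ∧
      (∑ a, star (v' a) * qk * v' a) = 0) :
    ∃ A : Matrix.specialOrthogonalGroup (Fin (n + 1)) ℝ,
      ∀ a, v' a = ∑ b, (A : Matrix (Fin (n + 1)) (Fin (n + 1)) ℝ) a b • v b := by
  obtain ⟨hi, hj, hk⟩ := hνv
  obtain ⟨hi', hj', hk'⟩ := hνv'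
  obtain ⟨A, hA, hAv⟩ :=
    (orthonormal_two_smul_quaternionCoordFrame hv hi hj hk).exists_mem_specialOrthogonalGroup
      (orthonormal_two_smul_quaternionCoordFrame hv' hi' hj' hk') (by simp; omega)
  refine ⟨⟨A, hA⟩, eq_sum_smul_of_toEuclideanLin_quaternionCoordFrame fun μ => ?_⟩
  simpa using hAv μ
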